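/- arXiv:1901.05675 — 8 statements merged into one kernel-verified Lean document; each statement's English description precedes it below -/
import Mathlib

section
/- Let $K = [a_1,b_1]\times\cdots\times[a_n,b_n]$ be a box, let $\alpha\in\mathbb{N}^n$ have full support (i.e. $\alpha_i \neq 0$ for all $i$), and let $\mathrm{ML}(\alpha) = \{\alpha\circ\omega : \omega\in\{0,1\}^n\}$ where $\alpha\circ\omega = (\alpha_i\omega_i)_i$. Define the moment map $m^{\mathrm{ML}(\alpha)}(x) = (x^\beta)_{\beta\in\mathrm{ML}(\alpha)}$. Then the moment body $M^{\mathrm{ML}(\alpha)}(K) = \mathrm{conv}(m^{\mathrm{ML}(\alpha)}(K))$ is a polytope: it equals $\mathrm{conv}(m^{\{0,1\}^n}(V))$, where $V$ is the finite set $\{x^{\alpha_1 e^1}_{\min}, x^{\alpha_1 e^1}_{\max}\}\times\cdots\times\{x^{\alpha_n e^n}_{\min}, x^{\alpha_n e^n}_{\max}\}$ of vertices of the box $\tilde K = \prod_i [x^{\alpha_i e^i}_{\min}, x^{\alpha_i e^i}_{\max}]$. -/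
open Finset

/-- The multilinear moment map. -/
noncomputable def mlMap (n : ℕ) (y : Fin n → ℝ) : (Fin n → Bool) → ℝ :=
  fun ω => ∏ i, (if ω i then y i else 1)

/-- A multilinear moment vector of a point of a box lies in the convex hull of the
multilinear moment vectors of the vertices of the box. -/
lemma ml_mem_hull (n : ℕ) (c d : Fin n → ℝ) (hcd : ∀ i, c i ≤ d i)
    (y : Fin n → ℝ) (hy : ∀ i, y i ∈ Set.Icc (c i) (d i)) :
    mlMap n y ∈ convexHull ℝ (mlMap n '' (Set.univ.pi fun i => ({c i, d i} : Set ℝ))) := by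
  classical
  set t : Fin n → ℝ := fun i => if d i = c i then 0 else (y i - c i) / (d i - c i) with ht
  have ht01 : ∀ i, 0 ≤ t i ∧ t i ≤ 1 := by
    intro i
    obtain ⟨h1, h2⟩ := hy i
    simp only [ht]
    split
    · norm_num
    · rename_i h
      have hd : 0 < d i - c i := by
        rcases lt_or_eq_of_le (hcd i) with h' | h'
        · linarith
        · exact absurd h'.symm h
      constructor
      · exact div_nonneg (by linarith) hd.le
      · rw [div_le_one hd]; linarith
  have hyt : ∀ i, y i = (1 - t i) * c i + t i * d i := by
    intro i
    obtain ⟨h1, h2⟩ := hy i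
    simp only [ht]
    split
    · rename_i h
      have : y i = c i := le_antisymm (h ▸ h2) h1
      rw [this]; ring
    · rename_i h
      have hd : d i - c i ≠ 0 := by
        intro h'; exact h (by linarith)
      field_simp
      ring
  set v : (Fin n → Bool) → Fin n → ℝ := fun σ i => if σ i then d i else c i with hv
  set w : (Fin n → Bool) → ℝ := fun σ => ∏ i, (if σ i then t i else 1 - t i) with hw
  have hw0 : ∀ σ, 0 ≤ w σ := by
    intro σ
    apply Finset.prod_nonneg
    intro i _
    rcases (ht01 i) with ⟨h0, h1⟩
    split <;> linarith
  have hwsum : ∑ σ : Fin n → Bool, w σ = 1 := by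
    have := Finset.prod_univ_sum (fun _ : Fin n => (Finset.univ : Finset Bool))
      (fun i b => if b then t i else 1 - t i)
    rw [Fintype.piFinset_univ] at this
    rw [hw, ← this]
    have : ∀ i : Fin n, (∑ b : Bool, if b then t i else 1 - t i) = 1 := by
      intro i; simp
    simp [this]
  have hvV : ∀ σ, v σ ∈ (Set.univ.pi fun i => ({c i, d i} : Set ℝ)) := by
    intro σ
    intro i _
    simp only [hv]
    split
    · right; rfl
    · left; rfl
  have hrep : mlMap n y = ∑ σ : Fin n → Bool, w σ • mlMap n (v σ) := by
    funext ω
    rw [Finset.sum_apply]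
    simp only [Pi.smul_apply, smul_eq_mul, mlMap, hw, hv]
    have : ∀ σ : Fin n → Bool,
        (∏ i, (if σ i then t i else 1 - t i)) * ∏ i, (if ω i then (if σ i then d i else c i) else 1)
        = ∏ i, ((if σ i then t i else 1 - t i) * (if ω i then (if σ i then d i else c i) else 1)) := by
      intro σ; rw [Finset.prod_mul_distrib]
    simp_rw [this]
    rw [← Fintype.piFinset_univ]
    rw [← Finset.prod_univ_sum (fun _ : Fin n => (Finset.univ : Finset Bool))
      (fun i b => (if b then t i else 1 - t i) * (if ω i then (if b then d i else c i) else 1))]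
    apply Finset.prod_congr rfl
    intro i _
    rw [Fintype.sum_bool]
    by_cases h : ω i
    · simp only [h, if_true, Bool.false_eq_true, if_false]
      rw [hyt i]; ring
    · simp only [h, if_false, Bool.false_eq_true, if_true]
      ring
  rw [hrep]
  exact (convex_convexHull ℝ _).sum_mem (fun σ _ => hw0 σ) hwsum
    (fun σ _ => subset_convexHull ℝ _ (Set.mem_image_of_mem _ (hvV σ)))

/-- The image of a box under coordinatewise powers is the box of coordinatewise
minima and maxima. -/
lemma pow_image_box (n : ℕ) (a b : Fin n → ℝ)
    (α : Fin n → ℕ) (mMin mMax : Fin n → ℝ)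
    (hmin : ∀ i, IsLeast ((fun x : Fin n → ℝ => x i ^ α i) ''
      (Set.univ.pi fun i => Set.Icc (a i) (b i))) (mMin i))
    (hmax : ∀ i, IsGreatest ((fun x : Fin n → ℝ => x i ^ α i) ''
      (Set.univ.pi fun i => Set.Icc (a i) (b i))) (mMax i)) :
    (fun x : Fin n → ℝ => fun i => x i ^ α i) '' (Set.univ.pi fun i => Set.Icc (a i) (b i))
      = Set.univ.pi fun i => Set.Icc (mMin i) (mMax i) := by
  apply Set.Subset.antisymm
  · rintro _ ⟨x, hx, rfl⟩
    intro i _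
    exact ⟨(hmin i).2 ⟨x, hx, rfl⟩, (hmax i).2 ⟨x, hx, rfl⟩⟩
  · intro y hy
    have key : ∀ i, ∃ s ∈ Set.Icc (a i) (b i), s ^ α i = y i := by
      intro i
      obtain ⟨x1, hx1, he1⟩ := (hmin i).1
      obtain ⟨x2, hx2, he2⟩ := (hmax i).1
      have h1 : x1 i ∈ Set.Icc (a i) (b i) := hx1 i (Set.mem_univ i)
      have h2 : x2 i ∈ Set.Icc (a i) (b i) := hx2 i (Set.mem_univ i)
      have hc : ContinuousOn (fun s : ℝ => s ^ α i) (Set.uIcc (x1 i) (x2 i)) :=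
        (continuous_pow (α i)).continuousOn
      have hsub := intermediate_value_uIcc hc
      have hle : mMin i ≤ mMax i := (hmin i).2 (hmax i).1
      have hyi : y i ∈ Set.uIcc ((fun s : ℝ => s ^ α i) (x1 i)) ((fun s : ℝ => s ^ α i) (x2 i)) := by
        simp only [he1, he2]
        rw [Set.uIcc_of_le hle]
        exact hy i (Set.mem_univ i)
      obtain ⟨s, hs, hse⟩ := hsub hyi
      exact ⟨s, Set.uIcc_subset_Icc h1 h2 hs, hse⟩
    choose s hs hse using key
    exact ⟨s, fun i _ => hs i, funext fun i => hse i⟩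

/-- The moment body of a multilinear pattern `ML(α)` (for `α` of full support) over a box
equals the convex hull of the multilinear moment vectors of the vertices of the box
`∏ᵢ [min x_i^{α_i}, max x_i^{α_i}]`. -/
theorem stmt1 (n : ℕ) (a b : Fin n → ℝ) (hab : ∀ i, a i < b i)
    (K : Set (Fin n → ℝ)) (hK : K = Set.univ.pi fun i => Set.Icc (a i) (b i))
    (α : Fin n → ℕ) (hα : ∀ i, α i ≠ 0)
    (mMin mMax : Fin n → ℝ)
    (hmin : ∀ i, IsLeast ((fun x : Fin n → ℝ => x i ^ α i) '' K) (mMin i))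
    (hmax : ∀ i, IsGreatest ((fun x : Fin n → ℝ => x i ^ α i) '' K) (mMax i))
    (V : Set (Fin n → ℝ)) (hV : V = Set.univ.pi fun i => ({mMin i, mMax i} : Set ℝ)) :
    convexHull ℝ ((fun x : Fin n → ℝ => fun ω : Fin n → Bool =>
        ∏ i, x i ^ (α i * (if ω i then 1 else 0))) '' K)
      = convexHull ℝ ((fun y : Fin n → ℝ => fun ω : Fin n → Bool =>
        ∏ i, (if ω i then y i else 1)) '' V) := by
  classical
  subst hK hV
  have hle : ∀ i, mMin i ≤ mMax i := fun i => (hmin i).2 (hmax i).1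
  -- The LHS map factors through coordinatewise powers.
  have hfact : (fun x : Fin n → ℝ => fun ω : Fin n → Bool =>
      ∏ i, x i ^ (α i * (if ω i then 1 else 0)))
      = mlMap n ∘ (fun x : Fin n → ℝ => fun i => x i ^ α i) := by
    funext x
    funext ω
    simp only [Function.comp_apply, mlMap]
    apply Finset.prod_congr rfl
    intro i _
    by_cases h : ω i
    · simp [h]
    · simp [h]
  have hRHS : (fun y : Fin n → ℝ => fun ω : Fin n → Bool =>
      ∏ i, (if ω i then y i else 1)) = mlMap n := rfl
  rw [hfact, hRHS, Set.image_comp, pow_image_box n a b α mMin mMax hmin hmax]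
  apply Set.Subset.antisymm
  · apply convexHull_min _ (convex_convexHull ℝ _)
    rintro _ ⟨y, hy, rfl⟩
    exact ml_mem_hull n mMin mMax hle y (fun i => hy i (Set.mem_univ i))
  · apply convexHull_mono
    apply Set.image_mono
    intro y hy
    intro i _
    rcases hy i (Set.mem_univ i) with h | h
    · exact h ▸ ⟨le_refl _, hle i⟩
    · exact h ▸ ⟨hle i, le_refl _⟩
end

section
/- Let $B\subseteq\mathbb{N}^n$ be finite and nonempty and let $\Gamma\in\mathbb{N}^{n\times k}$ have columns $\gamma^1,\ldots,\gamma^k\in B\setminus\{0\}$ with pairwise disjoint supports. Let $\mathrm{TS}(\Gamma,B) = (\gamma^1\mathbb{N}+\cdots+\gamma^k\mathbb{N})\cap B$. Then the moment body $M^{\mathrm{TS}(\Gamma,B)}(K)$ equals the $k$-variate moment body $M^{\tilde P}(\tilde K)$, where $\tilde P = \{\omega\in\mathbb{N}^k : \Gamma\omega\in\mathrm{TS}(\Gamma,B)\}$ and $\tilde K = \prod_{i=1}^k [x^{\gamma^i}_{\min}, x^{\gamma^i}_{\max}]$. -/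
/-- The moment body of a truncated submonoid pattern `TS(Γ,B)` over a box `K` equals the
`k`-variate moment body `M^{P̃}(K̃)`, identified along the unique representation
`β = Γ (w β)` of elements of the pattern. -/
theorem stmt3 (n k : ℕ) (a b : Fin n → ℝ) (hab : ∀ i, a i < b i)
    (K : Set (Fin n → ℝ)) (hK : K = Set.univ.pi fun i => Set.Icc (a i) (b i))
    (B : Finset (Fin n → ℕ)) (hB : B.Nonempty)
    (γ : Fin k → (Fin n → ℕ)) (hγB : ∀ j, γ j ∈ B) (hγ0 : ∀ j, γ j ≠ 0)
    (hdisj : ∀ j j', j ≠ j' → ∀ i, γ j i = 0 ∨ γ j' i = 0)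
    (TS : Finset (Fin n → ℕ))
    (hTS : ∀ β, β ∈ TS ↔ β ∈ B ∧ ∃ ω : Fin k → ℕ, β = ∑ j, ω j • γ j)
    (w : (Fin n → ℕ) → (Fin k → ℕ))
    (hw : ∀ β ∈ TS, β = ∑ j, w β j • γ j)
    (tmin tmax : Fin k → ℝ)
    (htmin : ∀ j, IsLeast ((fun x : Fin n → ℝ => ∏ i, x i ^ γ j i) '' K) (tmin j))
    (htmax : ∀ j, IsGreatest ((fun x : Fin n → ℝ => ∏ i, x i ^ γ j i) '' K) (tmax j)) :
    convexHull ℝ ((fun x : Fin n → ℝ => fun β : TS => ∏ i, x i ^ (β : Fin n → ℕ) i) '' K)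
      = convexHull ℝ ((fun y : Fin k → ℝ => fun β : TS => ∏ j, y j ^ w (β : Fin n → ℕ) j) ''
          (Set.univ.pi fun j => Set.Icc (tmin j) (tmax j))) := by
  classical
  -- key algebraic identity
  have calc1 : ∀ (x : Fin n → ℝ) (β : TS),
      ∏ j, (∏ i, x i ^ γ j i) ^ w (β : Fin n → ℕ) j = ∏ i, x i ^ (β : Fin n → ℕ) i := by
    intro x β
    have hβ : (β : Fin n → ℕ) = ∑ j, w (β : Fin n → ℕ) j • γ j := hw _ β.2
    have hβi : ∀ i, (β : Fin n → ℕ) i = ∑ j, γ j i * w (β : Fin n → ℕ) j := by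
      intro i
      have h2 := congrFun hβ i
      simpa [Finset.sum_apply, mul_comm] using h2
    calc ∏ j, (∏ i, x i ^ γ j i) ^ w (β : Fin n → ℕ) j
        = ∏ j, ∏ i, x i ^ (γ j i * w (β : Fin n → ℕ) j) := by
          simp_rw [← Finset.prod_pow, pow_mul]
      _ = ∏ i, ∏ j, x i ^ (γ j i * w (β : Fin n → ℕ) j) := Finset.prod_comm
      _ = ∏ i, x i ^ (β : Fin n → ℕ) i := by
          refine Finset.prod_congr rfl fun i _ => ?_
          rw [Finset.prod_pow_eq_pow_sum, hβi i]
  -- surjectivity of x ↦ (x^{γ^j})_j onto the box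
  have hconn : IsPreconnected K := by
    rw [hK]; exact (convex_pi fun i _ => convex_Icc _ _).isPreconnected
  have hcont : ∀ j : Fin k, ContinuousOn (fun x : Fin n → ℝ => ∏ i, x i ^ γ j i) K :=
    fun j => (continuous_finset_prod _ fun i _ => (continuous_apply i).pow _).continuousOn
  have key : ∀ y ∈ Set.univ.pi fun j => Set.Icc (tmin j) (tmax j),
      ∃ x ∈ K, ∀ j, ∏ i, x i ^ γ j i = y j := by
    intro y hy
    have hz : ∀ j : Fin k, ∃ z ∈ K, ∏ i, z i ^ γ j i = y j := by
      intro j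
      obtain ⟨xm, hxm, hxmv⟩ := (htmin j).1
      obtain ⟨xM, hxM, hxMv⟩ := (htmax j).1
      have := hconn.intermediate_value hxm hxM (hcont j)
      have hyj : y j ∈ Set.Icc (tmin j) (tmax j) := hy j trivial
      rw [← hxmv, ← hxMv] at hyj
      obtain ⟨z, hz1, hz2⟩ := this hyj
      exact ⟨z, hz1, hz2⟩
    choose z hzK hzv using hz
    set x : Fin n → ℝ := fun i => if h : ∃ j, γ j i ≠ 0 then z h.choose i else a i with hx
    refine ⟨x, ?_, ?_⟩
    · rw [hK]
      intro i _
      by_cases h : ∃ j, γ j i ≠ 0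
      · have hzm := hzK h.choose
        rw [hK] at hzm
        simp only [hx, dif_pos h]
        exact hzm i trivial
      · simp only [hx, dif_neg h]
        exact ⟨le_refl _, (hab i).le⟩
    · intro j
      rw [← hzv j]
      refine Finset.prod_congr rfl fun i _ => ?_
      by_cases hji : γ j i = 0
      · simp [hji]
      · have h : ∃ j', γ j' i ≠ 0 := ⟨j, hji⟩
        have hch : γ h.choose i ≠ 0 := h.choose_spec
        have : h.choose = j := by
          by_contra hne
          rcases hdisj h.choose j hne i with h1 | h2
          · exact hch h1
          · exact hji h2
        simp only [hx, dif_pos h, this]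
  -- the two image sets are equal
  have himg : ((fun x : Fin n → ℝ => fun β : TS => ∏ i, x i ^ (β : Fin n → ℕ) i) '' K)
      = ((fun y : Fin k → ℝ => fun β : TS => ∏ j, y j ^ w (β : Fin n → ℕ) j) ''
          (Set.univ.pi fun j => Set.Icc (tmin j) (tmax j))) := by
    ext v
    constructor
    · rintro ⟨x, hx, rfl⟩
      refine ⟨fun j => ∏ i, x i ^ γ j i, fun j _ => ⟨(htmin j).2 ⟨x, hx, rfl⟩,
        (htmax j).2 ⟨x, hx, rfl⟩⟩, ?_⟩
      funext β
      exact calc1 x β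
    · rintro ⟨y, hy, rfl⟩
      obtain ⟨x, hxK, hxv⟩ := key y hy
      refine ⟨x, hxK, ?_⟩
      funext β
      simp_rw [← hxv]
      exact (calc1 x β).symm
  rw [himg]
end

section
/- Let $P\subseteq\mathbb{N}^n$ be a finite nonempty set with $\mathrm{supp}(P)\neq[n]$ and let $\eta\in\mathbb{N}^n$ satisfy $\mathrm{supp}(\eta)\subseteq[n]\setminus\mathrm{supp}(P)$. Then $M^{\eta+P}(K) = \mathrm{conv}\big(x^\eta_{\min}\, M^P(K)\,\cup\, x^\eta_{\max}\, M^P(K)\big)$, where $\eta+P = \{\eta+\beta : \beta\in P\}$ and scalar multiplication of a set is pointwise. -/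
/-- Shifting a pattern `P` by an exponent `η` with disjoint support: the shifted moment body
is the convex hull of the union of the two scaled copies `x^η_min · M^P(K)` and
`x^η_max · M^P(K)`. -/
theorem stmt4 (n : ℕ) (a b : Fin n → ℝ) (hab : ∀ i, a i < b i)
    (K : Set (Fin n → ℝ)) (hK : K = Set.univ.pi fun i => Set.Icc (a i) (b i))
    (P : Finset (Fin n → ℕ)) (hP : P.Nonempty)
    (hPsupp : ∃ i, ∀ β ∈ P, β i = 0)
    (η : Fin n → ℕ) (hη : ∀ i, η i ≠ 0 → ∀ β ∈ P, β i = 0)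
    (cmin cmax : ℝ)
    (hmin : IsLeast ((fun x : Fin n → ℝ => ∏ i, x i ^ η i) '' K) cmin)
    (hmax : IsGreatest ((fun x : Fin n → ℝ => ∏ i, x i ^ η i) '' K) cmax) :
    convexHull ℝ
        ((fun x : Fin n → ℝ => fun β : P => ∏ i, x i ^ (η i + (β : Fin n → ℕ) i)) '' K)
      = convexHull ℝ
          (((cmin • ·) '' convexHull ℝ
              ((fun x : Fin n → ℝ => fun β : P => ∏ i, x i ^ (β : Fin n → ℕ) i) '' K))
            ∪ ((cmax • ·) '' convexHull ℝ
              ((fun x : Fin n → ℝ => fun β : P => ∏ i, x i ^ (β : Fin n → ℕ) i) '' K))) := by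
  classical
  set h : (Fin n → ℝ) → ℝ := fun x => ∏ i, x i ^ η i with hh
  set g : (Fin n → ℝ) → (P → ℝ) := fun x β => ∏ i, x i ^ ((β : Fin n → ℕ) i) with hg
  set f : (Fin n → ℝ) → (P → ℝ) := fun x β => ∏ i, x i ^ (η i + (β : Fin n → ℕ) i) with hf
  have hfg : ∀ x, f x = h x • g x := by
    intro x
    funext β
    simp only [hf, hg, hh, Pi.smul_apply, smul_eq_mul, pow_add, ← Finset.prod_mul_distrib]
  -- key splice lemma
  have key : ∀ w ∈ K, ∀ x ∈ K, (h w) • g x ∈ f '' K := by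
    intro w hw x hx
    refine ⟨fun i => if η i = 0 then x i else w i, ?_, ?_⟩
    · subst hK
      intro i _
      by_cases hi : η i = 0
      · simpa [hi] using hx i trivial
      · simpa [hi] using hw i trivial
    · have h1 : h (fun i => if η i = 0 then x i else w i) = h w := by
        refine Finset.prod_congr rfl fun i _ => ?_
        by_cases hi : η i = 0 <;> simp [hi]
      have h2 : g (fun i => if η i = 0 then x i else w i) = g x := by
        funext β
        refine Finset.prod_congr rfl fun i _ => ?_
        by_cases hi : η i = 0
        · simp [hi]
        · simp [hi, hη i hi _ β.2]
      rw [hfg, h1, h2]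
  obtain ⟨y, hyK, hyv⟩ := hmin.1
  obtain ⟨z, hzK, hzv⟩ := hmax.1
  apply Set.Subset.antisymm
  · -- ⊆
    refine convexHull_min ?_ (convex_convexHull ℝ _)
    rintro _ ⟨x, hx, rfl⟩
    have hlo : cmin ≤ h x := hmin.2 ⟨x, hx, rfl⟩
    have hhi : h x ≤ cmax := hmax.2 ⟨x, hx, rfl⟩
    have hseg : h x ∈ segment ℝ cmin cmax := by
      rw [segment_eq_Icc (hlo.trans hhi)]; exact ⟨hlo, hhi⟩
    obtain ⟨t, s, ht, hs, hts, heq⟩ := hseg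
    have hmem1 : cmin • g x ∈ (cmin • ·) '' convexHull ℝ (g '' K) :=
      ⟨g x, subset_convexHull ℝ _ ⟨x, hx, rfl⟩, rfl⟩
    have hmem2 : cmax • g x ∈ (cmax • ·) '' convexHull ℝ (g '' K) :=
      ⟨g x, subset_convexHull ℝ _ ⟨x, hx, rfl⟩, rfl⟩
    have : f x = t • (cmin • g x) + s • (cmax • g x) := by
      rw [hfg, smul_smul, smul_smul, ← add_smul]
      simp only [smul_eq_mul] at heq
      rw [heq]
    rw [this]
    exact (convex_convexHull ℝ _)
      (subset_convexHull ℝ _ (Set.mem_union_left _ hmem1))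
      (subset_convexHull ℝ _ (Set.mem_union_right _ hmem2)) ht hs hts
  · -- ⊇
    refine convexHull_min (Set.union_subset ?_ ?_) (convex_convexHull ℝ _)
    · rintro _ ⟨v, hv, rfl⟩
      have : (cmin • ·) '' convexHull ℝ (g '' K) ⊆ convexHull ℝ (f '' K) := by
        rw [Set.image_smul, ← convexHull_smul]
        refine convexHull_mono ?_
        rintro _ ⟨_, ⟨x, hx, rfl⟩, rfl⟩
        exact hyv ▸ key y hyK x hx
      exact this ⟨v, hv, rfl⟩
    · rintro _ ⟨v, hv, rfl⟩
      have : (cmax • ·) '' convexHull ℝ (g '' K) ⊆ convexHull ℝ (f '' K) := by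
        rw [Set.image_smul, ← convexHull_smul]
        refine convexHull_mono ?_
        rintro _ ⟨_, ⟨x, hx, rfl⟩, rfl⟩
        exact hzv ▸ key z hzK x hx
      exact this ⟨v, hv, rfl⟩
end

section
/- Let $d\in\mathbb{N}$ and $l<u$ be real numbers. Let $\Delta^{[l,u]} = \mathrm{conv}\{\Phi^{[l,u]}u^i : i\in[d]_0\}$ with $\Phi^{[l,u]}_{k,j}=\binom{k}{j}l^{k-j}(u-l)^j$ and $u^i = \sum_{k=0}^i e^k$. Then the $\ell_1$-diameter of $\Delta^{[l,u]}$ satisfies $\mathrm{diam}(\Delta^{[l,u]}) \le |u-l|\, d^2\, \eta_{l,u}^d$, where $\eta_{l,u} = \max\{|l|+|u-l|,\,1\}$. -/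
-- convexity of l1 distance to a fixed point
lemma l1_convexOn (n : ℕ) (w0 : Fin n → ℝ) :
    ConvexOn ℝ Set.univ (fun v : Fin n → ℝ => ∑ k, |v k - w0 k|) := by
  refine ⟨convex_univ, fun x _ y _ a b ha hb hab => ?_⟩
  have : ∀ k, |(a • x + b • y) k - w0 k| ≤ a * |x k - w0 k| + b * |y k - w0 k| := by
    intro k
    have h1 : (a • x + b • y) k - w0 k = a * (x k - w0 k) + b * (y k - w0 k) := by
      have : b = 1 - a := by linarith
      subst this
      simp [Pi.smul_apply]
      ring
    rw [h1]
    calc |a * (x k - w0 k) + b * (y k - w0 k)|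
        ≤ |a * (x k - w0 k)| + |b * (y k - w0 k)| := abs_add_le _ _
      _ = a * |x k - w0 k| + b * |y k - w0 k| := by
          rw [abs_mul, abs_mul, abs_of_nonneg ha, abs_of_nonneg hb]
  calc (∑ k, |(a • x + b • y) k - w0 k|)
      ≤ ∑ k, (a * |x k - w0 k| + b * |y k - w0 k|) := Finset.sum_le_sum fun k _ => this k
    _ = a * (∑ k, |x k - w0 k|) + b * (∑ k, |y k - w0 k|) := by
        rw [Finset.sum_add_distrib, Finset.mul_sum, Finset.mul_sum]

/-- The `ℓ₁`-diameter of the polytope `Δ^{[l,u]}` is at most `|u-l| d² η_{l,u}^d`. -/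
theorem stmt7 (d : ℕ) (l u : ℝ) (hlu : l < u)
    (Φ : Matrix (Fin (d+1)) (Fin (d+1)) ℝ)
    (hΦ : ∀ k j, Φ k j =
      ((k : ℕ).choose (j : ℕ) : ℝ) * l ^ ((k : ℕ) - (j : ℕ)) * (u - l) ^ (j : ℕ))
    (U : Fin (d+1) → (Fin (d+1) → ℝ))
    (hU : ∀ i k, U i k = if (k : ℕ) ≤ (i : ℕ) then 1 else 0)
    (η : ℝ) (hη : η = max (|l| + |u - l|) 1) :
    ∀ v ∈ convexHull ℝ (Set.range fun i => Φ.mulVec (U i)),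
    ∀ w ∈ convexHull ℝ (Set.range fun i => Φ.mulVec (U i)),
      ∑ k, |v k - w k| ≤ |u - l| * (d : ℝ) ^ 2 * η ^ d := by
  set x : Fin (d+1) → (Fin (d+1) → ℝ) := fun i => Φ.mulVec (U i) with hx
  set A := |l| with hA
  set B := |u - l| with hB
  have hB0 : 0 ≤ B := abs_nonneg _
  have hA0 : 0 ≤ A := abs_nonneg _
  have hABη : A + B ≤ η := hη ▸ le_max_left _ _
  have hη1 : (1:ℝ) ≤ η := hη ▸ le_max_right _ _
  have hη0 : 0 ≤ η := le_trans zero_le_one hη1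
  set C := B * (d:ℝ)^2 * η ^ d with hC
  -- step 1: vertex bound
  have key : ∀ i i' : Fin (d+1), ∑ k, |x i k - x i' k| ≤ C := by
    -- wlog machinery: prove for i' ≤ i
    have main : ∀ i i' : Fin (d+1), (i' : ℕ) ≤ (i : ℕ) → ∑ k, |x i k - x i' k| ≤ C := by
      intro i i' hii
      -- per-k bound
      have perk : ∀ k : Fin (d+1),
          |x i k - x i' k| ≤ ∑ j : Fin d, |Φ k j.succ| := by
        intro k
        have hdiff : x i k - x i' k = ∑ j, Φ k j * (U i j - U i' j) := by
          simp only [hx, Matrix.mulVec, dotProduct]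
          rw [← Finset.sum_sub_distrib]
          congr 1; ext j; ring
        rw [hdiff]
        calc |∑ j, Φ k j * (U i j - U i' j)|
            ≤ ∑ j, |Φ k j * (U i j - U i' j)| := Finset.abs_sum_le_sum_abs _ _
          _ ≤ ∑ j, (if j = 0 then 0 else |Φ k j|) := by
              apply Finset.sum_le_sum
              intro j _
              rw [abs_mul]
              by_cases hj : j = 0
              · subst hj
                have h1 : U i 0 = 1 := by rw [hU]; simp
                have h2 : U i' 0 = 1 := by rw [hU]; simp
                simp [h1, h2]
              · simp only [hj, if_false]
                have : |U i j - U i' j| ≤ 1 := by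
                  rw [hU, hU]
                  split_ifs <;> norm_num
                calc |Φ k j| * |U i j - U i' j| ≤ |Φ k j| * 1 :=
                      mul_le_mul_of_nonneg_left this (abs_nonneg _)
                  _ = |Φ k j| := mul_one _
          _ = ∑ j : Fin d, |Φ k j.succ| := by
              rw [Fin.sum_univ_succ]
              simp [Fin.succ_ne_zero]
      -- bound the per-k sums
      have hS : ∀ k : Fin (d+1), (∑ j : Fin d, |Φ k j.succ|) ≤
          if (k:ℕ) = 0 then 0 else B * (d:ℝ) * η ^ d := by
        intro k
        by_cases hk : (k:ℕ) = 0
        · simp only [hk, if_pos]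
          have : ∀ j : Fin d, |Φ k j.succ| = 0 := by
            intro j
            rw [hΦ, hk]
            simp [Nat.choose_eq_zero_of_lt (Nat.succ_pos _)]
          simp [this]
        · simp only [hk, if_neg, if_false]
          obtain ⟨m, hm⟩ : ∃ m, (k:ℕ) = m + 1 := Nat.exists_eq_succ_of_ne_zero hk
          have hmd : m + 1 ≤ d := by
            have := k.isLt; omega
          -- each term ≤ B * (m+1) * (choose m j * A^(m-j) * B^j)
          have term_le : ∀ j : Fin d, |Φ k j.succ| ≤
              B * ((m:ℝ)+1) * ((m.choose j : ℝ) * A ^ (m - (j:ℕ)) * B ^ (j:ℕ)) := by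
            intro j
            rw [hΦ]
            have hjs : (j.succ : ℕ) = (j:ℕ)+1 := rfl
            have he : (k:ℕ) - ((j:ℕ)+1) = m - (j:ℕ) := by omega
            have hval : |((k:ℕ).choose (j.succ:ℕ) : ℝ) * l ^ ((k:ℕ) - (j.succ:ℕ)) * (u-l) ^ ((j.succ:ℕ))|
                = ((k:ℕ).choose ((j:ℕ)+1) : ℝ) * A ^ (m - (j:ℕ)) * B ^ ((j:ℕ)+1) := by
              rw [abs_mul, abs_mul, abs_pow, abs_pow, Nat.abs_cast, hjs, he]
            rw [hval]
            have hch : ((k:ℕ).choose ((j:ℕ)+1) : ℝ) ≤ ((m:ℝ)+1) * (m.choose j : ℝ) := by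
              have h2 : (k:ℕ).choose ((j:ℕ)+1) ≤ (m+1) * m.choose (j:ℕ) := by
                rw [hm, Nat.add_one_mul_choose_eq]
                exact Nat.le_mul_of_pos_right _ (Nat.succ_pos _)
              calc ((k:ℕ).choose ((j:ℕ)+1) : ℝ) ≤ ((m+1) * m.choose (j:ℕ) : ℕ) := by exact_mod_cast h2
                _ = ((m:ℝ)+1) * (m.choose j : ℝ) := by push_cast; ring
            have hpos : (0:ℝ) ≤ A ^ (m - (j:ℕ)) * B ^ ((j:ℕ)+1) :=
              mul_nonneg (pow_nonneg hA0 _) (pow_nonneg hB0 _)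
            calc ((k:ℕ).choose ((j:ℕ)+1) : ℝ) * A ^ (m - (j:ℕ)) * B ^ ((j:ℕ)+1)
                ≤ (((m:ℝ)+1) * (m.choose j : ℝ)) * A ^ (m - (j:ℕ)) * B ^ ((j:ℕ)+1) := by
                  apply mul_le_mul_of_nonneg_right _ (pow_nonneg hB0 _)
                  exact mul_le_mul_of_nonneg_right hch (pow_nonneg hA0 _)
              _ = B * ((m:ℝ)+1) * ((m.choose j : ℝ) * A ^ (m - (j:ℕ)) * B ^ (j:ℕ)) := by ring
          have hsum : (∑ j : Fin d, (m.choose j : ℝ) * A ^ (m - (j:ℕ)) * B ^ (j:ℕ)) = (B + A) ^ m := by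
            rw [Fin.sum_univ_eq_sum_range (fun j => (m.choose j : ℝ) * A ^ (m - j) * B ^ j)]
            rw [add_pow]
            rw [← Finset.sum_subset (Finset.range_subset_range.mpr (by omega : m + 1 ≤ d))]
            · apply Finset.sum_congr rfl
              intro j hj
              ring
            · intro j _ hj
              simp only [Finset.mem_range, not_lt] at hj
              have : m.choose j = 0 := Nat.choose_eq_zero_of_lt (by omega)
              simp [this]
          calc (∑ j : Fin d, |Φ k j.succ|)
              ≤ ∑ j : Fin d, B * ((m:ℝ)+1) * ((m.choose j : ℝ) * A ^ (m - (j:ℕ)) * B ^ (j:ℕ)) :=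
                Finset.sum_le_sum fun j _ => term_le j
            _ = B * ((m:ℝ)+1) * (B + A) ^ m := by rw [← Finset.mul_sum, hsum]
            _ ≤ B * (d:ℝ) * η ^ d := by
                have h1 : (B + A) ^ m ≤ η ^ m :=
                  pow_le_pow_left₀ (by linarith) (by linarith) m
                have h2 : η ^ m ≤ η ^ d := pow_le_pow_right₀ hη1 (by omega)
                have h3 : ((m:ℝ)+1) ≤ (d:ℝ) := by exact_mod_cast hmd
                calc B * ((m:ℝ)+1) * (B + A) ^ m
                    ≤ B * ((m:ℝ)+1) * η ^ m := by
                      apply mul_le_mul_of_nonneg_left h1 (by positivity)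
                  _ ≤ B * (d:ℝ) * η ^ d := by
                      apply mul_le_mul (mul_le_mul_of_nonneg_left h3 hB0) h2
                        (pow_nonneg hη0 m) (by positivity)
      calc ∑ k, |x i k - x i' k|
          ≤ ∑ k : Fin (d+1), (if (k:ℕ) = 0 then 0 else B * (d:ℝ) * η^d) :=
            Finset.sum_le_sum fun k _ => le_trans (perk k) (hS k)
        _ = ∑ k : Fin d, (B * (d:ℝ) * η^d) := by
            rw [Fin.sum_univ_succ]
            simp [Fin.val_succ]
        _ = (d:ℝ) * (B * (d:ℝ) * η^d) := by
            rw [Finset.sum_const]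
            simp [nsmul_eq_mul]
        _ = C := by rw [hC]; ring
    intro i i'
    rcases le_total (i':ℕ) (i:ℕ) with h | h
    · exact main i i' h
    · have := main i' i h
      calc ∑ k, |x i k - x i' k| = ∑ k, |x i' k - x i k| := by
            apply Finset.sum_congr rfl; intro k _; rw [abs_sub_comm]
        _ ≤ C := this
  -- step 2: maximum principle, twice
  intro v hv w hw
  have hconv : ∀ w0 : Fin (d+1) → ℝ, ConvexOn ℝ (convexHull ℝ (Set.range x)) (fun v => ∑ k, |v k - w0 k|) :=
    fun w0 => (l1_convexOn (d+1) w0).subset (Set.subset_univ _) (convex_convexHull _ _)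
  obtain ⟨y, hy, hvy⟩ := (hconv w).exists_ge_of_mem_convexHull (subset_convexHull ℝ _) hv
  obtain ⟨iy, rfl⟩ := hy
  have hconv2 : ConvexOn ℝ (convexHull ℝ (Set.range x)) (fun z => ∑ k, |x iy k - z k|) := by
    have := (l1_convexOn (d+1) (x iy)).subset (Set.subset_univ _) (convex_convexHull ℝ (Set.range x))
    refine ⟨this.1, fun p hp q hq a b ha hb hab => ?_⟩
    have h2 := this.2 hp hq ha hb hab
    simp only at h2 ⊢
    calc ∑ k, |x iy k - (a • p + b • q) k| = ∑ k, |(a • p + b • q) k - x iy k| := by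
          apply Finset.sum_congr rfl; intro k _; rw [abs_sub_comm]
      _ ≤ a * ∑ k, |p k - x iy k| + b * ∑ k, |q k - x iy k| := h2
      _ = a * ∑ k, |x iy k - p k| + b * ∑ k, |x iy k - q k| := by
          congr 1 <;> · congr 1; apply Finset.sum_congr rfl; intro k _; rw [abs_sub_comm]
  obtain ⟨z, hz, hwz⟩ := hconv2.exists_ge_of_mem_convexHull (subset_convexHull ℝ _) hw
  obtain ⟨iz, rfl⟩ := hz
  calc ∑ k, |v k - w k| ≤ ∑ k, |x iy k - w k| := hvy
    _ ≤ ∑ k, |x iy k - x iz k| := hwz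
    _ ≤ C := key iy iz
end

section
/- Let $d\in\mathbb{N}$, let $[a,b]\subseteq\mathbb{R}$ be a segment, and let $\mathcal{I}$ be a finite family of segments whose union is $[a,b]$. Then the univariate moment body $M^{[d]_0}([a,b]) = \mathrm{conv}(\{(1,t,\ldots,t^d): t\in[a,b]\})$ is contained in $\mathrm{conv}\big(\bigcup_{I\in\mathcal{I}}\Delta^I\big)$, where for $I=[l,u]$ the polytope $\Delta^I$ is the convex hull of the points $\Phi^{[l,u]}u^i$, $i\in[d]_0$, with $\Phi^{[l,u]}_{k,j}=\binom{k}{j}l^{k-j}(u-l)^j$ and $u^i=\sum_{k=0}^i e^k$. -/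
/-- The univariate moment body of `[a,b]` is contained in the convex hull of the union of the
polytopes `Δ^I` over a covering `𝓘` of `[a,b]`. -/
theorem stmt8 (d : ℕ) (a b : ℝ) (hab : a ≤ b)
    (𝓘 : Finset (ℝ × ℝ))
    (hcov : Set.Icc a b = ⋃ I ∈ 𝓘, Set.Icc I.1 I.2)
    (U : Fin (d+1) → (Fin (d+1) → ℝ))
    (hU : ∀ i k, U i k = if (k : ℕ) ≤ (i : ℕ) then 1 else 0)
    (Φ : ℝ → ℝ → Matrix (Fin (d+1)) (Fin (d+1)) ℝ)
    (hΦ : ∀ l u k j, Φ l u k j =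
      ((k : ℕ).choose (j : ℕ) : ℝ) * l ^ ((k : ℕ) - (j : ℕ)) * (u - l) ^ (j : ℕ)) :
    convexHull ℝ ((fun t : ℝ => fun k : Fin (d+1) => t ^ (k : ℕ)) '' Set.Icc a b)
      ⊆ convexHull ℝ
          (⋃ I ∈ 𝓘, convexHull ℝ (Set.range fun i => (Φ I.1 I.2).mulVec (U i))) := by
  apply convexHull_mono
  rintro x ⟨t, ht, rfl⟩
  have ht' : t ∈ ⋃ I ∈ 𝓘, Set.Icc I.1 I.2 := hcov ▸ ht
  simp only [Set.mem_iUnion] at ht' ⊢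
  obtain ⟨I, hI, htI⟩ := ht'
  refine ⟨I, hI, ?_⟩
  obtain ⟨l, u⟩ := I
  obtain ⟨hlt, htu⟩ := htI
  dsimp only at hlt htu ⊢
  have hlu : l ≤ u := le_trans hlt htu
  -- the reparametrized point s ∈ [0,1] with t = l + s*(u-l)
  set s : ℝ := if u = l then 0 else (t - l) / (u - l) with hsdef
  have hcases : (u = l ∧ s = 0) ∨ (l < u ∧ s = (t - l) / (u - l)) := by
    by_cases h : u = l
    · exact Or.inl ⟨h, by simp [hsdef, h]⟩
    · exact Or.inr ⟨lt_of_le_of_ne hlu (Ne.symm h), by simp [hsdef, h]⟩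
  have hs0 : 0 ≤ s := by
    rcases hcases with ⟨_, h⟩ | ⟨hlt', h⟩
    · simp [h]
    · rw [h]; exact div_nonneg (by linarith) (by linarith)
  have hs1 : s ≤ 1 := by
    rcases hcases with ⟨_, h⟩ | ⟨hlt', h⟩
    · simp [h]
    · rw [h, div_le_one (by linarith)]; linarith
  have hts : t = l + s * (u - l) := by
    rcases hcases with ⟨he, h⟩ | ⟨hlt', h⟩
    · rw [h]; subst he; linarith
    · have hne : u - l ≠ 0 := sub_ne_zero.mpr (ne_of_gt hlt')
      rw [h, div_mul_cancel₀ _ hne]; ring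
  -- the weights
  set W : ℕ → ℝ := fun i => if i < d then s ^ i - s ^ (i+1) else s ^ d with hWdef
  have hW0 : ∀ i, 0 ≤ W i := by
    intro i
    rw [hWdef]
    dsimp only
    split
    · have := pow_le_pow_of_le_one hs0 hs1 (Nat.le_succ i)
      simpa [sub_nonneg] using this
    · positivity
  have hWrange : ∀ n, n ≤ d → ∑ i ∈ Finset.range n, W i = 1 - s ^ n := by
    intro n hn
    have h1 : ∀ i ∈ Finset.range n, W i = s ^ i - s ^ (i+1) := by
      intro i hi
      rw [hWdef]
      exact if_pos (lt_of_lt_of_le (Finset.mem_range.mp hi) hn)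
    rw [Finset.sum_congr rfl h1, Finset.sum_range_sub' (fun i => s ^ i), pow_zero]
  have hWtot : ∑ i ∈ Finset.range (d+1), W i = 1 := by
    rw [Finset.sum_range_succ, hWrange d le_rfl, hWdef]
    simp
  -- partial sums: ∑_{i ≥ j} W i = s^j
  have hWpart : ∀ j : ℕ, j ≤ d →
      ∑ i ∈ Finset.range (d+1), (if j ≤ i then W i else 0) = s ^ j := by
    intro j hj
    rw [← Finset.sum_filter, Finset.range_eq_Ico,
      Finset.Ico_filter_le_of_left_le (Nat.zero_le j),
      Finset.sum_Ico_eq_sub W (Nat.le_succ_of_le hj), hWtot, hWrange j hj]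
    ring
  -- the key identity: moment point is a convex combination of the Δ vertices
  have key : (fun k : Fin (d+1) => t ^ (k : ℕ))
      = ∑ i : Fin (d+1), W (i : ℕ) • (Φ l u).mulVec (U i) := by
    funext k
    rw [Finset.sum_apply]
    have step1 : ∀ i : Fin (d+1), (W (i : ℕ) • (Φ l u).mulVec (U i)) k
        = ∑ j : Fin (d+1), (Φ l u k j) * (if (j : ℕ) ≤ (i : ℕ) then W (i : ℕ) else 0) := by
      intro i
      simp only [Pi.smul_apply, Matrix.mulVec, dotProduct, smul_eq_mul,
        Finset.mul_sum, hU]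
      refine Finset.sum_congr rfl fun j _ => by split <;> ring
    rw [Finset.sum_congr rfl fun i _ => step1 i, Finset.sum_comm]
    have step2 : ∀ j : Fin (d+1),
        ∑ i : Fin (d+1), (Φ l u k j) * (if (j : ℕ) ≤ (i : ℕ) then W (i : ℕ) else 0)
        = (Φ l u k j) * s ^ (j : ℕ) := by
      intro j
      rw [← Finset.mul_sum]
      congr 1
      rw [Fin.sum_univ_eq_sum_range (fun i => if (j : ℕ) ≤ i then W i else 0)]
      exact hWpart (j : ℕ) (Nat.lt_succ_iff.mp j.isLt)
    rw [Finset.sum_congr rfl fun j _ => step2 j]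
    -- binomial theorem
    have hbin : t ^ (k : ℕ)
        = ∑ j ∈ Finset.range ((k : ℕ) + 1),
            (s * (u - l)) ^ j * l ^ ((k : ℕ) - j) * ((k : ℕ).choose j : ℝ) := by
      rw [hts, add_comm l (s * (u - l)), add_pow]
    have hbin2 : t ^ (k : ℕ) = ∑ j ∈ Finset.range ((k : ℕ) + 1),
        ((k : ℕ).choose j : ℝ) * l ^ ((k : ℕ) - j) * (u - l) ^ j * s ^ j := by
      rw [hbin]
      refine Finset.sum_congr rfl fun j _ => by rw [mul_pow]; ring
    have hfin : (∑ j : Fin (d+1), Φ l u k j * s ^ (j : ℕ))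
        = ∑ j ∈ Finset.range (d+1),
            ((k : ℕ).choose j : ℝ) * l ^ ((k : ℕ) - j) * (u - l) ^ j * s ^ j := by
      simp only [hΦ]
      exact Fin.sum_univ_eq_sum_range
        (fun j => ((k : ℕ).choose j : ℝ) * l ^ ((k : ℕ) - j) * (u - l) ^ j * s ^ j) (d+1)
    rw [hfin, hbin2]
    refine Finset.sum_subset (Finset.range_subset_range.mpr (by omega)) fun j hj hj' => ?_
    have hkj : (k : ℕ) < j := by
      simp only [Finset.mem_range] at hj hj'
      omega
    simp [Nat.choose_eq_zero_of_lt hkj]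
  rw [key]
  refine Convex.sum_mem (convex_convexHull ℝ _) (fun i _ => hW0 _) ?_ ?_
  · rw [Fin.sum_univ_eq_sum_range W, hWtot]
  · exact fun i _ => subset_convexHull ℝ _ ⟨i, rfl⟩
end

section
/- Let $X, X^1,\ldots,X^m$ be nonempty compact convex subsets of $\mathbb{R}^A$ (for a finite index set $A$) such that $Y := X^1\cap\cdots\cap X^m$ contains an $\ell_1$-ball of radius $\rho>0$ and $X^i\subseteq X$ for all $i$. Let $\epsilon>0$ and let $x\in X$ satisfy $\mathrm{dist}_1(X^i,x)\le\epsilon$ for every $i\in[m]$. Then $\mathrm{dist}_1(Y,x)\le \frac{\epsilon}{\rho}\,\mathrm{diam}(X)$, where distances and diameter are taken with respect to the $\ell_1$-norm. -/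
/-!
Let `c` be the centre of the `ρ`-ball in `Y` and `t = ε / (ρ + ε)`. Shrinking towards a point
`z` of a convex set `K ⊇ closedBall c ρ` by the factor `1 - t` keeps a ball of radius `t ρ`
inside `K`. Taking for `z` a point of `Xⁱ` nearest to `x`, the point `(1 - t) x + t c` is within
`(1 - t) ε = t ρ` of `(1 - t) z + t c`, hence lies in every `Xⁱ`; its distance to `x` is
`t · dist x c ≤ (ε / ρ) diam X`.
-/

open Metric Set Pointwise

theorem Convex.closedBall_combo_subset {E : Type*} [NormedAddCommGroup E] [NormedSpace ℝ E]
    {K : Set E} (hK : Convex ℝ K) {c z : E} {ρ t : ℝ} (hρ : 0 ≤ ρ)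
    (hball : closedBall c ρ ⊆ K) (hz : z ∈ K) (ht₀ : 0 ≤ t) (ht₁ : t ≤ 1) :
    closedBall ((1 - t) • z + t • c) (t * ρ) ⊆ K :=
  calc closedBall ((1 - t) • z + t • c) (t * ρ)
      = (1 - t) • {z} + t • closedBall c ρ := by
        rw [smul_closedBall _ _ hρ, smul_set_singleton, singleton_add_closedBall,
          Real.norm_of_nonneg ht₀]
    _ ⊆ (1 - t) • K + t • K := by gcongr; exact singleton_subset_iff.2 hz
    _ ⊆ K := hK.set_combo_subset (by linarith) ht₀ (by ring)

theorem IsCompact.combo_mem_of_infDist_le {E : Type*} [NormedAddCommGroup E] [NormedSpace ℝ E]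
    {K : Set E} (hKc : IsCompact K) (hKne : K.Nonempty) (hKconv : Convex ℝ K) {c x : E}
    {ρ ε : ℝ} (hρ : 0 < ρ) (hε : 0 ≤ ε) (hball : closedBall c ρ ⊆ K)
    (hx : infDist x K ≤ ε) :
    (1 - ε / (ρ + ε)) • x + (ε / (ρ + ε)) • c ∈ K := by
  obtain ⟨z, hz, hxz⟩ := hKc.exists_infDist_eq_dist hKne x
  have ht₁ : ε / (ρ + ε) ≤ 1 := div_le_one_of_le₀ (by linarith) (by positivity)
  have hs : 1 - ε / (ρ + ε) = ρ / (ρ + ε) := by field_simp; ring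
  refine hKconv.closedBall_combo_subset hρ.le hball hz (by positivity) ht₁ ?_
  rw [mem_closedBall, dist_add_right, dist_smul₀, hs, Real.norm_of_nonneg (by positivity)]
  calc ρ / (ρ + ε) * dist x z ≤ ρ / (ρ + ε) * ε := by gcongr; exact hxz ▸ hx
    _ = ε / (ρ + ε) * ρ := by ring

theorem stmt10_general (A : Type*) [Fintype A] (m : ℕ)
    (X : Set (PiLp 1 fun _ : A => ℝ)) (Xi : Fin m → Set (PiLp 1 fun _ : A => ℝ))
    (hXc : IsCompact X)
    (hXine : ∀ i, (Xi i).Nonempty) (hXic : ∀ i, IsCompact (Xi i))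
    (hXiconv : ∀ i, Convex ℝ (Xi i))
    (hsub : ∀ i, Xi i ⊆ X)
    (ρ : ℝ) (hρ : 0 < ρ) (c : PiLp 1 fun _ : A => ℝ)
    (hball : Metric.closedBall c ρ ⊆ ⋂ i, Xi i)
    (ε : ℝ) (hε : 0 < ε)
    (x : PiLp 1 fun _ : A => ℝ) (hx : x ∈ X)
    (hdist : ∀ i, Metric.infDist x (Xi i) ≤ ε) :
    Metric.infDist x (⋂ i, Xi i) ≤ ε / ρ * Metric.diam X := by
  rcases isEmpty_or_nonempty (Fin m) with _ | ⟨⟨i₀⟩⟩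
  · rw [iInter_of_empty, infDist_zero_of_mem (mem_univ x)]
    positivity
  have hcX : c ∈ X := hsub i₀ (mem_iInter.1 (hball (mem_closedBall_self hρ.le)) i₀)
  set t := ε / (ρ + ε)
  have hy : (1 - t) • x + t • c ∈ ⋂ i, Xi i := mem_iInter.2 fun i =>
    (hXic i).combo_mem_of_infDist_le (hXine i) (hXiconv i) hρ hε.le
      (hball.trans (iInter_subset _ i)) (hdist i)
  calc infDist x (⋂ i, Xi i) ≤ dist x ((1 - t) • x + t • c) := infDist_le_dist_of_mem hy
    _ = t * dist x c := by
      rw [← AffineMap.lineMap_apply_module, dist_left_lineMap, Real.norm_of_nonneg (by positivity)]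
    _ ≤ ε / ρ * diam X := by
      gcongr
      · exact div_le_div_of_nonneg_left hε.le hρ (by linarith)
      · exact dist_le_diam_of_mem hXc.isBounded hx hcX

/-- If each `Xⁱ ⊆ X` and their intersection contains an `ℓ₁`-ball of radius `ρ`, then a point
of `X` at `ℓ₁`-distance at most `ε` from each `Xⁱ` is at distance at most `(ε/ρ) diam X`
from the intersection. All metric notions are for the `ℓ₁` norm (`PiLp 1`). -/
theorem stmt10 (A : Type*) [Fintype A] (m : ℕ)
    (X : Set (PiLp 1 fun _ : A => ℝ)) (Xi : Fin m → Set (PiLp 1 fun _ : A => ℝ))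
    (hXne : X.Nonempty) (hXc : IsCompact X) (hXconv : Convex ℝ X)
    (hXine : ∀ i, (Xi i).Nonempty) (hXic : ∀ i, IsCompact (Xi i))
    (hXiconv : ∀ i, Convex ℝ (Xi i))
    (hsub : ∀ i, Xi i ⊆ X)
    (ρ : ℝ) (hρ : 0 < ρ) (c : PiLp 1 fun _ : A => ℝ)
    (hball : Metric.closedBall c ρ ⊆ ⋂ i, Xi i)
    (ε : ℝ) (hε : 0 < ε)
    (x : PiLp 1 fun _ : A => ℝ) (hx : x ∈ X)
    (hdist : ∀ i, Metric.infDist x (Xi i) ≤ ε) :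
    Metric.infDist x (⋂ i, Xi i) ≤ ε / ρ * Metric.diam X :=
  stmt10_general A m X Xi hXc hXine hXic hXiconv hsub ρ hρ c hball ε hε x hx hdist
end

section
/- Let $\gamma\in\mathbb{N}^n\setminus\{0\}$, $d\in\mathbb{N}$, and $\mathrm{CH}(\gamma,d) = \{i\gamma : i = 0,\ldots,d\}$. Then for a box $K\subseteq\mathbb{R}^n$, the moment body $M^{\mathrm{CH}(\gamma,d)}(K)$ equals the univariate moment body $M^{[d]_0}([x^\gamma_{\min}, x^\gamma_{\max}]) = \mathrm{conv}(\{(1,t,t^2,\ldots,t^d) : t\in[x^\gamma_{\min}, x^\gamma_{\max}]\})$. -/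
/-- The moment body of a chain pattern `CH(γ,d)` over a box `K` equals the univariate moment
body of the interval `[min_K x^γ, max_K x^γ]`. -/
theorem stmt15 (n d : ℕ) (a b : Fin n → ℝ) (hab : ∀ i, a i < b i)
    (K : Set (Fin n → ℝ)) (hK : K = Set.univ.pi fun i => Set.Icc (a i) (b i))
    (γ : Fin n → ℕ) (hγ : γ ≠ 0)
    (tmin tmax : ℝ)
    (hmin : IsLeast ((fun x : Fin n → ℝ => ∏ j, x j ^ γ j) '' K) tmin)
    (hmax : IsGreatest ((fun x : Fin n → ℝ => ∏ j, x j ^ γ j) '' K) tmax) :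
    convexHull ℝ
        ((fun x : Fin n → ℝ => fun i : Fin (d+1) => ∏ j, x j ^ ((i : ℕ) * γ j)) '' K)
      = convexHull ℝ
          ((fun t : ℝ => fun i : Fin (d+1) => t ^ (i : ℕ)) '' Set.Icc tmin tmax) := by
  set p : (Fin n → ℝ) → ℝ := fun x => ∏ j, x j ^ γ j with hp
  have himg : p '' K = Set.Icc tmin tmax := by
    apply Set.Subset.antisymm
    · rintro t ht
      exact ⟨hmin.2 ht, hmax.2 ht⟩
    · have hconv : Convex ℝ K := by
        rw [hK]; exact convex_pi fun i _ => convex_Icc _ _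
      have hconn : IsPreconnected (p '' K) :=
        hconv.isPreconnected.image p (Continuous.continuousOn (by continuity))
      exact hconn.Icc_subset hmin.1 hmax.1
  have hbase : ((fun x : Fin n → ℝ => fun i : Fin (d+1) => ∏ j, x j ^ ((i : ℕ) * γ j)) '' K)
      = ((fun t : ℝ => fun i : Fin (d+1) => t ^ (i : ℕ)) '' Set.Icc tmin tmax) := by
    rw [← himg, ← Set.image_comp]
    apply Set.image_congr
    intro x _
    funext i
    simp only [Function.comp, hp]
    rw [← Finset.prod_pow]
    congr 1
    funext j
    rw [← pow_mul, Nat.mul_comm]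
  rw [hbase]
end

section
/- Let $p$ be a univariate real polynomial with $\deg p \le 2d$, where $d$ is a nonnegative integer, let $a<b$ be reals, and suppose $p(t)\ge 0$ for all $t\in[a,b]$. Then there exist polynomials $\sigma_0$, a sum of squares of polynomials of degree at most $d$, and $\sigma_1$, a sum of squares of polynomials of degree at most $d-1$ each (so $\deg\sigma_1\le 2d-2$), such that $p(t) = \sigma_0(t) + \sigma_1(t)\,(t-a)(b-t)$ for all $t$. -/
open Polynomial Filter Set Topology

namespace Stmt18Aux

/-! ### Sums of squares indexed by lists -/

/-- `σ` is a sum of squares of polynomials each satisfying `P`. -/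
def SOSL (P : ℝ[X] → Prop) (σ : ℝ[X]) : Prop :=
  ∃ L : List ℝ[X], (∀ q ∈ L, P q) ∧ σ = (L.map (· ^ 2)).sum

theorem SOSL.zero {P : ℝ[X] → Prop} : SOSL P 0 := ⟨[], by simp, by simp⟩

theorem SOSL.single {P : ℝ[X] → Prop} {q : ℝ[X]} (h : P q) : SOSL P (q ^ 2) :=
  ⟨[q], by simpa, by simp⟩

theorem SOSL.add {P : ℝ[X] → Prop} {σ τ : ℝ[X]} (hσ : SOSL P σ) (hτ : SOSL P τ) :
    SOSL P (σ + τ) := by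
  obtain ⟨L, hL, rfl⟩ := hσ; obtain ⟨M, hM, rfl⟩ := hτ
  refine ⟨L ++ M, ?_, by simp⟩
  intro q hq; rcases List.mem_append.1 hq with h | h
  exacts [hL q h, hM q h]

theorem SOSL.mono {P Q : ℝ[X] → Prop} {σ : ℝ[X]} (h : ∀ q, P q → Q q) (hσ : SOSL P σ) :
    SOSL Q σ := by
  obtain ⟨L, hL, rfl⟩ := hσ
  exact ⟨L, fun q hq => h q (hL q hq), rfl⟩

theorem SOSL.mul_sq_left {Q R : ℝ[X] → Prop} {τ : ℝ[X]} (g : ℝ[X]) (hτ : SOSL Q τ)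
    (h : ∀ y, Q y → R (g * y)) : SOSL R (g ^ 2 * τ) := by
  obtain ⟨L, hL, rfl⟩ := hτ
  refine ⟨L.map (fun y => g * y), ?_, ?_⟩
  · intro q hq
    obtain ⟨y, hy, rfl⟩ := List.mem_map.1 hq
    exact h y (hL y hy)
  · rw [List.map_map]
    rw [show ((fun x => x ^ 2) ∘ fun y => g * y) = fun y => g ^ 2 * (y ^ 2) by
      funext y; simp [mul_pow], List.sum_map_mul_left]

theorem SOSL.mul {P Q R : ℝ[X] → Prop} {σ τ : ℝ[X]} (hσ : SOSL P σ) (hτ : SOSL Q τ)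
    (h : ∀ x y, P x → Q y → R (x * y)) : SOSL R (σ * τ) := by
  obtain ⟨L, hL, rfl⟩ := hσ
  induction L with
  | nil => simpa using SOSL.zero
  | cons x L ih =>
    simp only [List.map_cons, List.sum_cons, add_mul]
    refine SOSL.add ?_ (ih (fun q hq => hL q (List.mem_cons_of_mem _ hq)))
    exact SOSL.mul_sq_left x hτ (fun y hy => h x y (hL x List.mem_cons_self) hy)

theorem SOSL.smul {P R : ℝ[X] → Prop} {σ : ℝ[X]} {c : ℝ} (hc : 0 ≤ c) (hσ : SOSL P σ)
    (h : ∀ y, P y → R (C (Real.sqrt c) * y)) : SOSL R (C c * σ) := by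
  have : C c * σ = (C (Real.sqrt c)) ^ 2 * σ := by
    rw [← C_pow, Real.sq_sqrt hc]
  rw [this]
  exact SOSL.mul_sq_left _ hσ h

/-- sum of squares of polynomials of degree at most `m` -/
def SB (m : ℕ) (σ : ℝ[X]) : Prop := SOSL (fun q => q.natDegree ≤ m) σ

/-- sum of squares of polynomials of degree less than `m` -/
def SBlt (m : ℕ) (σ : ℝ[X]) : Prop := SOSL (fun q => q.natDegree + 1 ≤ m) σ

/-! ### The two kinds of representations -/

/-- even-type representation: `p = σ₀ + σ₁ (X-a)(b-X)` -/
def ER (a b : ℝ) (m : ℕ) (p : ℝ[X]) : Prop :=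
  ∃ σ0 σ1 : ℝ[X], SB m σ0 ∧ SBlt m σ1 ∧
    p = σ0 + σ1 * ((X - C a) * (C b - X))

/-- odd-type representation: `p = σ₀ (X-a) + σ₁ (b-X)` -/
def OR (a b : ℝ) (m : ℕ) (p : ℝ[X]) : Prop :=
  ∃ σ0 σ1 : ℝ[X], SB m σ0 ∧ SB m σ1 ∧
    p = σ0 * (X - C a) + σ1 * (C b - X)

section AB

variable {a b : ℝ}

theorem SB.mono' {m m' : ℕ} (h : m ≤ m') {σ : ℝ[X]} (hσ : SB m σ) : SB m' σ :=
  SOSL.mono (fun q hq => hq.trans h) hσ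

theorem SBlt.mono' {m m' : ℕ} (h : m ≤ m') {σ : ℝ[X]} (hσ : SBlt m σ) : SBlt m' σ :=
  SOSL.mono (fun q hq => hq.trans h) hσ

theorem ER.mono {m m' : ℕ} (h : m ≤ m') {p : ℝ[X]} (hp : ER a b m p) : ER a b m' p := by
  obtain ⟨σ0, σ1, h0, h1, rfl⟩ := hp
  exact ⟨σ0, σ1, h0.mono' h, h1.mono' h, rfl⟩

theorem OR.mono {m m' : ℕ} (h : m ≤ m') {p : ℝ[X]} (hp : OR a b m p) : OR a b m' p := by
  obtain ⟨σ0, σ1, h0, h1, rfl⟩ := hp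
  exact ⟨σ0, σ1, h0.mono' h, h1.mono' h, rfl⟩

theorem ER.add {m : ℕ} {p q : ℝ[X]} (hp : ER a b m p) (hq : ER a b m q) : ER a b m (p + q) := by
  obtain ⟨σ0, σ1, h0, h1, rfl⟩ := hp
  obtain ⟨τ0, τ1, g0, g1, rfl⟩ := hq
  exact ⟨σ0 + τ0, σ1 + τ1, h0.add g0, h1.add g1, by ring⟩

theorem OR.add {m : ℕ} {p q : ℝ[X]} (hp : OR a b m p) (hq : OR a b m q) : OR a b m (p + q) := by
  obtain ⟨σ0, σ1, h0, h1, rfl⟩ := hp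
  obtain ⟨τ0, τ1, g0, g1, rfl⟩ := hq
  exact ⟨σ0 + τ0, σ1 + τ1, h0.add g0, h1.add g1, by ring⟩

theorem ER_const {c : ℝ} (hc : 0 ≤ c) (m : ℕ) : ER a b m (C c) :=
  ⟨C (Real.sqrt c) ^ 2, 0, SOSL.single (by simp),
    SOSL.zero, by rw [← C_pow, Real.sq_sqrt hc]; ring⟩

theorem ER.smul {m : ℕ} {p : ℝ[X]} {c : ℝ} (hc : 0 ≤ c) (hp : ER a b m p) :
    ER a b m (C c * p) := by
  obtain ⟨σ0, σ1, h0, h1, rfl⟩ := hp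
  refine ⟨C c * σ0, C c * σ1, ?_, ?_, by ring⟩
  · exact SOSL.smul hc h0 (fun y hy => (natDegree_C_mul_le _ _).trans hy)
  · exact SOSL.smul hc h1 (fun y hy => (Nat.add_le_add_right (natDegree_C_mul_le _ _) 1).trans hy)

theorem OR.smul {m : ℕ} {p : ℝ[X]} {c : ℝ} (hc : 0 ≤ c) (hp : OR a b m p) :
    OR a b m (C c * p) := by
  obtain ⟨σ0, σ1, h0, h1, rfl⟩ := hp
  refine ⟨C c * σ0, C c * σ1, ?_, ?_, by ring⟩
  · exact SOSL.smul hc h0 (fun y hy => (natDegree_C_mul_le _ _).trans hy)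
  · exact SOSL.smul hc h1 (fun y hy => (natDegree_C_mul_le _ _).trans hy)

theorem natDegree_W_le : ((X - C a) * (C b - X)).natDegree ≤ 2 := by
  apply (natDegree_mul_le).trans
  have h1 : (X - C a).natDegree ≤ 1 := by compute_degree
  have h2 : (C b - X).natDegree ≤ 1 := by compute_degree
  omega

theorem ER.mul {m e : ℕ} {p s : ℝ[X]} (hp : ER a b m p) (hs : ER a b e s) :
    ER a b (m + e) (p * s) := by
  obtain ⟨σ0, σ1, h0, h1, rfl⟩ := hp
  obtain ⟨τ0, τ1, g0, g1, rfl⟩ := hs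
  set W : ℝ[X] := (X - C a) * (C b - X) with hW
  refine ⟨σ0 * τ0 + W ^ 2 * (σ1 * τ1), σ0 * τ1 + σ1 * τ0, ?_, ?_, by ring⟩
  · refine SOSL.add (h0.mul g0 ?_) ?_
    · intro x y hx hy
      exact (natDegree_mul_le).trans (by omega)
    · have h11 : SOSL (fun q => q.natDegree + 2 ≤ m + e) (σ1 * τ1) := h1.mul g1 (fun x y hx hy =>
        by have := natDegree_mul_le (p := x) (q := y); omega)
      refine SOSL.mul_sq_left W h11 ?_
      intro y hy
      have h2 := natDegree_W_le (a := a) (b := b)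
      rw [← hW] at h2
      have := natDegree_mul_le (p := W) (q := y)
      omega
  · refine SOSL.add (h0.mul g1 ?_) (h1.mul g0 ?_)
    · intro x y hx hy
      have := natDegree_mul_le (p := x) (q := y); omega
    · intro x y hx hy
      have := natDegree_mul_le (p := x) (q := y); omega

theorem key_ab (hab : a < b) : (C b - C a) * C ((b - a)⁻¹) = (1 : ℝ[X]) := by
  rw [← C_sub, ← C_mul, mul_inv_cancel₀ (sub_ne_zero.2 hab.ne'), map_one]

theorem sqrt_mul_deg {c : ℝ} {y : ℝ[X]} : (C (Real.sqrt c) * y).natDegree ≤ y.natDegree :=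
  natDegree_C_mul_le _ _

theorem lin_mul_deg {r : ℝ} {y : ℝ[X]} : ((X - C r) * y).natDegree ≤ 1 + y.natDegree := by
  refine natDegree_mul_le.trans ?_
  have : (X - C r).natDegree ≤ 1 := by compute_degree
  omega

theorem lin_mul_deg' {r : ℝ} {y : ℝ[X]} : ((C r - X) * y).natDegree ≤ 1 + y.natDegree := by
  refine natDegree_mul_le.trans ?_
  have : (C r - X).natDegree ≤ 1 := by compute_degree
  omega

theorem conv_EO {m : ℕ} {p : ℝ[X]} (hab : a < b) (hp : ER a b m p) : OR a b m p := by
  obtain ⟨σ0, σ1, h0, h1, rfl⟩ := hp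
  have hc : (0:ℝ) ≤ (b - a)⁻¹ := inv_nonneg.2 (sub_nonneg.2 hab.le)
  refine ⟨C ((b-a)⁻¹) * (σ0 + (C b - X) ^ 2 * σ1), C ((b-a)⁻¹) * (σ0 + (X - C a) ^ 2 * σ1),
    ?_, ?_, ?_⟩
  · refine SOSL.smul hc (h0.add (SOSL.mul_sq_left _ h1 ?_)) ?_
    · intro y hy; have := lin_mul_deg' (r := b) (y := y); omega
    · intro y hy; exact sqrt_mul_deg.trans hy
  · refine SOSL.smul hc (h0.add (SOSL.mul_sq_left _ h1 ?_)) ?_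
    · intro y hy; have := lin_mul_deg (r := a) (y := y); omega
    · intro y hy; exact sqrt_mul_deg.trans hy
  · have key := key_ab hab
    linear_combination (-(σ0 + σ1 * ((X - C a) * (C b - X)))) * key

theorem conv_OE {m : ℕ} {p : ℝ[X]} (hab : a < b) (hp : OR a b m p) : ER a b (m+1) p := by
  obtain ⟨σ0, σ1, h0, h1, rfl⟩ := hp
  have hc : (0:ℝ) ≤ (b - a)⁻¹ := inv_nonneg.2 (sub_nonneg.2 hab.le)
  refine ⟨C ((b-a)⁻¹) * ((X - C a) ^ 2 * σ0 + (C b - X) ^ 2 * σ1),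
    C ((b-a)⁻¹) * (σ0 + σ1), ?_, ?_, ?_⟩
  · refine SOSL.smul hc ((SOSL.mul_sq_left (R := fun q => q.natDegree ≤ m+1) _ h0 ?_).add
      (SOSL.mul_sq_left (R := fun q => q.natDegree ≤ m+1) _ h1 ?_)) ?_
    · intro y hy; have := lin_mul_deg (r := a) (y := y); omega
    · intro y hy; have := lin_mul_deg' (r := b) (y := y); omega
    · intro y hy; exact sqrt_mul_deg.trans hy
  · refine SOSL.smul hc (h0.add h1) ?_
    intro y hy; have := sqrt_mul_deg (c := (b-a)⁻¹) (y := y); omega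
  · have key := key_ab hab
    linear_combination (-(σ0 * (X - C a) + σ1 * (C b - X))) * key

theorem OR_mul_Xa {m : ℕ} {q : ℝ[X]} (hq : OR a b m q) : ER a b (m+1) ((X - C a) * q) := by
  obtain ⟨σ0, σ1, h0, h1, rfl⟩ := hq
  refine ⟨(X - C a) ^ 2 * σ0, σ1, ?_, ?_, by ring⟩
  · exact SOSL.mul_sq_left _ h0 (fun y hy => by have := lin_mul_deg (r := a) (y := y); omega)
  · exact SOSL.mono (fun y hy => by omega) h1

theorem OR_mul_bX {m : ℕ} {q : ℝ[X]} (hq : OR a b m q) : ER a b (m+1) ((C b - X) * q) := by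
  obtain ⟨σ0, σ1, h0, h1, rfl⟩ := hq
  refine ⟨(C b - X) ^ 2 * σ1, σ0, ?_, ?_, by ring⟩
  · exact SOSL.mul_sq_left _ h1 (fun y hy => by have := lin_mul_deg' (r := b) (y := y); omega)
  · exact SOSL.mono (fun y hy => by omega) h0

theorem ER_mul_Xa {m : ℕ} {q : ℝ[X]} (hq : ER a b m q) : OR a b m ((X - C a) * q) := by
  obtain ⟨σ0, σ1, h0, h1, rfl⟩ := hq
  refine ⟨σ0, (X - C a) ^ 2 * σ1, h0, ?_, by ring⟩
  exact SOSL.mul_sq_left _ h1 (fun y hy => by have := lin_mul_deg (r := a) (y := y); omega)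

theorem ER_mul_bX {m : ℕ} {q : ℝ[X]} (hq : ER a b m q) : OR a b m ((C b - X) * q) := by
  obtain ⟨σ0, σ1, h0, h1, rfl⟩ := hq
  refine ⟨(C b - X) ^ 2 * σ1, σ0, ?_, h0, by ring⟩
  exact SOSL.mul_sq_left _ h1 (fun y hy => by have := lin_mul_deg' (r := b) (y := y); omega)

theorem ER_sq_mul {m : ℕ} {f q : ℝ[X]} (hf : f.natDegree ≤ 1) (hq : ER a b m q) :
    ER a b (m+1) (f ^ 2 * q) := by
  obtain ⟨σ0, σ1, h0, h1, rfl⟩ := hq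
  refine ⟨f ^ 2 * σ0, f ^ 2 * σ1, ?_, ?_, by ring⟩
  · exact SOSL.mul_sq_left _ h0 (fun y hy => by
      have := natDegree_mul_le (p := f) (q := y); omega)
  · exact SOSL.mul_sq_left _ h1 (fun y hy => by
      have := natDegree_mul_le (p := f) (q := y); omega)

theorem OR_sq_mul {m : ℕ} {f q : ℝ[X]} (hf : f.natDegree ≤ 1) (hq : OR a b m q) :
    OR a b (m+1) (f ^ 2 * q) := by
  obtain ⟨σ0, σ1, h0, h1, rfl⟩ := hq
  refine ⟨f ^ 2 * σ0, f ^ 2 * σ1, ?_, ?_, by ring⟩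
  · exact SOSL.mul_sq_left _ h0 (fun y hy => by
      have := natDegree_mul_le (p := f) (q := y); omega)
  · exact SOSL.mul_sq_left _ h1 (fun y hy => by
      have := natDegree_mul_le (p := f) (q := y); omega)

end AB

/-! ### Analytic facts -/

theorem eval_nonneg_left {q : ℝ[X]} {x y : ℝ} (hxy : x < y)
    (h : ∀ t ∈ Set.Ioo x y, 0 ≤ q.eval t) : 0 ≤ q.eval x := by
  have hc : Tendsto (fun t => q.eval t) (𝓝[>] x) (𝓝 (q.eval x)) :=
    ((q.continuous_aeval).tendsto x).mono_left nhdsWithin_le_nhds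
  refine ge_of_tendsto hc ?_
  filter_upwards [Ioo_mem_nhdsGT_of_mem ⟨le_refl x, hxy⟩] with t ht using h t ht

theorem eval_nonneg_right {q : ℝ[X]} {x y : ℝ} (hxy : x < y)
    (h : ∀ t ∈ Set.Ioo x y, 0 ≤ q.eval t) : 0 ≤ q.eval y := by
  have hc : Tendsto (fun t => q.eval t) (𝓝[<] y) (𝓝 (q.eval y)) :=
    ((q.continuous_aeval).tendsto y).mono_left nhdsWithin_le_nhds
  refine ge_of_tendsto hc ?_
  filter_upwards [Ioo_mem_nhdsLT_of_mem ⟨hxy, le_refl y⟩] with t ht using h t ht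

theorem sq_dvd_interior {p : ℝ[X]} {a b r : ℝ} (hp : ∀ t ∈ Set.Icc a b, 0 ≤ p.eval t)
    (hr : r ∈ Set.Ioo a b) (h0 : p.eval r = 0) : (X - C r) ^ 2 ∣ p := by
  have hmin : IsLocalMin (fun t => p.eval t) r := by
    have hmem : Set.Ioo a b ∈ 𝓝 r := isOpen_Ioo.mem_nhds hr
    filter_upwards [hmem] with t ht
    simpa [h0] using hp t (Set.Ioo_subset_Icc_self ht)
  have hd : p.derivative.eval r = 0 := by
    have := hmin.deriv_eq_zero
    rwa [Polynomial.deriv] at this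
  obtain ⟨q, hq⟩ := dvd_iff_isRoot.2 h0
  have hqr : q.eval r = 0 := by
    have hder : p.derivative = q + (X - C r) * q.derivative := by
      rw [hq, derivative_mul]; simp
    rw [hder] at hd; simpa using hd
  obtain ⟨q2, hq2⟩ := dvd_iff_isRoot.2 hqr
  exact ⟨q2, by rw [hq, hq2]; ring⟩

theorem exists_real_root_of_odd : ∀ n : ℕ, ∀ p : ℝ[X], p.natDegree = n → Odd n →
    ∃ r : ℝ, p.IsRoot r := by
  intro n
  induction n using Nat.strong_induction_on with
  | _ n ih =>
    intro p hn hodd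
    have hn0 : p.natDegree ≠ 0 := by rw [hn]; rintro rfl; simp at hodd
    obtain ⟨z, hz⟩ : ∃ z : ℂ, aeval z p = 0 :=
      IsAlgClosed.exists_aeval_eq_zero ℂ p (degree_ne_of_natDegree_ne hn0)
    by_cases him : z.im = 0
    · lift z to ℝ using him
      refine ⟨z, ?_⟩
      erw [aeval_ofReal, RCLike.ofReal_eq_zero] at hz
      exact hz
    · obtain ⟨q, hq⟩ := p.quadratic_dvd_of_aeval_eq_zero_im_ne_zero hz him
      have hp0 : p ≠ 0 := fun h => hn0 (by simp [h])
      have hq0 : q ≠ 0 := fun h => hp0 (by simp [hq, h])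
      have hsdeg : (X ^ 2 - C (2 * z.re) * X + C (‖z‖ ^ 2) : ℝ[X]).natDegree = 2 := by
        compute_degree!
      have hdq : p.natDegree = 2 + q.natDegree := by
        rw [hq, natDegree_mul (by intro h; rw [h] at hsdeg; simp at hsdeg) hq0, hsdeg]
      obtain ⟨r, hr⟩ := ih q.natDegree (by omega) q rfl (by
        rcases hodd with ⟨k, hk⟩; exact ⟨k - 1, by omega⟩)
      exact ⟨r, by rw [hq]; simp [IsRoot, hr.eq_zero]⟩

theorem norm_sq_complex (z : ℂ) : ‖z‖ ^ 2 = z.re ^ 2 + z.im ^ 2 := by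
  rw [Complex.sq_norm, Complex.normSq_apply]; ring

/-! ### The main induction -/

theorem main {a b : ℝ} (hab : a < b) : ∀ n : ℕ, ∀ p : ℝ[X], p.natDegree ≤ n →
    (∀ t ∈ Set.Icc a b, 0 ≤ p.eval t) → ER a b ((n+1)/2) p ∧ OR a b (n/2) p := by
  intro n
  induction n using Nat.strong_induction_on with
  | _ n ih =>
  intro p hdeg hpos
  by_cases h0 : p.natDegree = 0
  · obtain ⟨c, rfl⟩ := natDegree_eq_zero.1 h0
    have hc : 0 ≤ c := by simpa using hpos a (Set.left_mem_Icc.2 hab.le)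
    exact ⟨ER_const hc _, conv_EO hab (ER_const hc _)⟩
  by_cases hlt : p.natDegree < n
  · obtain ⟨hE, hO⟩ := ih (n-1) (by omega) p (by omega) hpos
    exact ⟨hE.mono (by omega), hO.mono (by omega)⟩
  have hn : p.natDegree = n := by omega
  have hn1 : 1 ≤ n := by omega
  have hp0 : p ≠ 0 := fun h => h0 (by simp [h])
  by_cases hroot : ∃ r : ℝ, p.IsRoot r
  · obtain ⟨r, hr⟩ := hroot
    rcases lt_trichotomy r a with hra | hra | hra
    · -- r < a
      obtain ⟨q, hq⟩ := dvd_iff_isRoot.2 hr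
      have hq0 : q ≠ 0 := fun h => hp0 (by rw [hq, h, mul_zero])
      have hdq : q.natDegree = n - 1 := by
        have h1 := natDegree_mul (X_sub_C_ne_zero r) hq0
        rw [natDegree_X_sub_C, ← hq, hn] at h1; omega
      have hqpos : ∀ t ∈ Set.Icc a b, 0 ≤ q.eval t := by
        intro t ht
        have h1 : 0 < t - r := by have := ht.1; linarith
        have h2 : 0 ≤ (t - r) * q.eval t := by
          have := hpos t ht; rw [hq] at this; simpa using this
        nlinarith
      obtain ⟨hE, hO⟩ := ih (n-1) (by omega) q (by omega) hqpos
      have hsplit : p = (X - C a) * q + C (a - r) * q := by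
        rw [hq, C_sub]; ring
      constructor
      · rw [hsplit]
        exact ((OR_mul_Xa hO).mono (by omega)).add ((hE.smul (by linarith)).mono (by omega))
      · rw [hsplit]
        exact ((ER_mul_Xa hE).mono (by omega)).add
          (((conv_EO hab hE).smul (by linarith)).mono (by omega))
    · -- r = a
      subst hra
      obtain ⟨q, hq⟩ := dvd_iff_isRoot.2 hr
      have hq0 : q ≠ 0 := fun h => hp0 (by rw [hq, h, mul_zero])
      have hdq : q.natDegree = n - 1 := by
        have h1 := natDegree_mul (X_sub_C_ne_zero r) hq0
        rw [natDegree_X_sub_C, ← hq, hn] at h1; omega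
      have hq' : ∀ t ∈ Set.Icc r b, t ≠ r → 0 ≤ q.eval t := by
        intro t ht htr
        have h1 : 0 < t - r := by
          rcases lt_or_eq_of_le ht.1 with h | h
          · linarith
          · exact absurd h.symm htr
        have h2 : 0 ≤ (t - r) * q.eval t := by
          have := hpos t ht; rw [hq] at this; simpa using this
        nlinarith
      have hqpos : ∀ t ∈ Set.Icc r b, 0 ≤ q.eval t := by
        intro t ht
        by_cases htr : t = r
        · subst htr
          exact eval_nonneg_left hab (fun u hu =>
            hq' u (Set.Ioo_subset_Icc_self hu) (ne_of_gt hu.1))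
        · exact hq' t ht htr
      obtain ⟨hE, hO⟩ := ih (n-1) (by omega) q (by omega) hqpos
      exact ⟨by rw [hq]; exact (OR_mul_Xa hO).mono (by omega),
        by rw [hq]; exact (ER_mul_Xa hE).mono (by omega)⟩
    rcases lt_trichotomy r b with hrb | hrb | hrb
    · -- a < r < b : interior root
      obtain ⟨q, hq⟩ := sq_dvd_interior hpos ⟨hra, hrb⟩ hr.eq_zero
      have hq0 : q ≠ 0 := fun h => hp0 (by rw [hq, h, mul_zero])
      have hdq : q.natDegree = n - 2 ∧ 2 ≤ n := by
        have h1 := natDegree_mul (pow_ne_zero 2 (X_sub_C_ne_zero r)) hq0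
        rw [natDegree_pow, natDegree_X_sub_C, ← hq, hn] at h1
        omega
      have hq' : ∀ t ∈ Set.Icc a b, t ≠ r → 0 ≤ q.eval t := by
        intro t ht htr
        have h1 : 0 < (t - r) ^ 2 := by
          have hne : t - r ≠ 0 := sub_ne_zero.2 htr
          positivity
        have h2 : 0 ≤ (t - r) ^ 2 * q.eval t := by
          have := hpos t ht; rw [hq] at this; simpa using this
        nlinarith
      have hqpos : ∀ t ∈ Set.Icc a b, 0 ≤ q.eval t := by
        intro t ht
        by_cases htr : t = r
        · subst htr
          refine eval_nonneg_left hrb (fun u hu => hq' u ?_ (ne_of_gt hu.1))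
          exact ⟨(hra.trans hu.1).le, hu.2.le⟩
        · exact hq' t ht htr
      obtain ⟨hE, hO⟩ := ih (n-2) (by omega) q (by omega) hqpos
      have hdX : (X - C r).natDegree ≤ 1 := by rw [natDegree_X_sub_C]
      exact ⟨by rw [hq]; exact (ER_sq_mul hdX hE).mono (by omega),
        by rw [hq]; exact (OR_sq_mul hdX hO).mono (by omega)⟩
    · -- r = b
      subst hrb
      obtain ⟨q0, hq0'⟩ := dvd_iff_isRoot.2 hr
      set q : ℝ[X] := -q0 with hqdef
      have hq : p = (C r - X) * q := by rw [hq0', hqdef]; ring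
      have hCX : (C r - X : ℝ[X]).natDegree = 1 := by
        rw [show (C r - X : ℝ[X]) = -(X - C r) by ring, natDegree_neg, natDegree_X_sub_C]
      have hCX0 : (C r - X : ℝ[X]) ≠ 0 := fun h => by rw [h] at hCX; simp at hCX
      have hq0 : q ≠ 0 := fun h => hp0 (by rw [hq, h, mul_zero])
      have hdq : q.natDegree = n - 1 := by
        have h1 := natDegree_mul hCX0 hq0
        rw [hCX, ← hq, hn] at h1; omega
      have hq' : ∀ t ∈ Set.Icc a r, t ≠ r → 0 ≤ q.eval t := by
        intro t ht htr
        have h1 : 0 < r - t := by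
          rcases lt_or_eq_of_le ht.2 with h | h
          · linarith
          · exact absurd h htr
        have h2 : 0 ≤ (r - t) * q.eval t := by
          have := hpos t ht; rw [hq] at this; simpa using this
        nlinarith
      have hqpos : ∀ t ∈ Set.Icc a r, 0 ≤ q.eval t := by
        intro t ht
        by_cases htr : t = r
        · subst htr
          exact eval_nonneg_right hab (fun u hu =>
            hq' u (Set.Ioo_subset_Icc_self hu) (ne_of_lt hu.2))
        · exact hq' t ht htr
      obtain ⟨hE, hO⟩ := ih (n-1) (by omega) q (by omega) hqpos
      exact ⟨by rw [hq]; exact (OR_mul_bX hO).mono (by omega),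
        by rw [hq]; exact (ER_mul_bX hE).mono (by omega)⟩
    · -- b < r
      obtain ⟨q0, hq0'⟩ := dvd_iff_isRoot.2 hr
      set q : ℝ[X] := -q0 with hqdef
      have hq : p = (C r - X) * q := by rw [hq0', hqdef]; ring
      have hCX : (C r - X : ℝ[X]).natDegree = 1 := by
        rw [show (C r - X : ℝ[X]) = -(X - C r) by ring, natDegree_neg, natDegree_X_sub_C]
      have hCX0 : (C r - X : ℝ[X]) ≠ 0 := fun h => by rw [h] at hCX; simp at hCX
      have hq0 : q ≠ 0 := fun h => hp0 (by rw [hq, h, mul_zero])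
      have hdq : q.natDegree = n - 1 := by
        have h1 := natDegree_mul hCX0 hq0
        rw [hCX, ← hq, hn] at h1; omega
      have hqpos : ∀ t ∈ Set.Icc a b, 0 ≤ q.eval t := by
        intro t ht
        have h1 : 0 < r - t := by have := ht.2; linarith
        have h2 : 0 ≤ (r - t) * q.eval t := by
          have := hpos t ht; rw [hq] at this; simpa using this
        nlinarith
      obtain ⟨hE, hO⟩ := ih (n-1) (by omega) q (by omega) hqpos
      have hsplit : p = (C b - X) * q + C (r - b) * q := by
        rw [hq, C_sub]; ring
      constructor
      · rw [hsplit]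
        exact ((OR_mul_bX hO).mono (by omega)).add ((hE.smul (by linarith)).mono (by omega))
      · rw [hsplit]
        exact ((ER_mul_bX hE).mono (by omega)).add
          (((conv_EO hab hE).smul (by linarith)).mono (by omega))
  · -- no real root
    push_neg at hroot
    have heven : Even n := by
      by_contra hodd
      obtain ⟨r, hr⟩ := exists_real_root_of_odd n p hn (Nat.not_even_iff_odd.1 hodd)
      exact hroot r hr
    obtain ⟨z, hz⟩ : ∃ z : ℂ, aeval z p = 0 :=
      IsAlgClosed.exists_aeval_eq_zero ℂ p (degree_ne_of_natDegree_ne h0)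
    have him : z.im ≠ 0 := by
      intro him
      lift z to ℝ using him
      refine absurd ?_ (hroot z)
      erw [aeval_ofReal, RCLike.ofReal_eq_zero] at hz
      exact hz
    obtain ⟨q, hq⟩ := p.quadratic_dvd_of_aeval_eq_zero_im_ne_zero hz him
    set s : ℝ[X] := X ^ 2 - C (2 * z.re) * X + C (‖z‖ ^ 2) with hsdef
    have hsdeg : s.natDegree = 2 := by rw [hsdef]; compute_degree!
    have hs0 : s ≠ 0 := fun h => by rw [h] at hsdeg; simp at hsdeg
    have hq0 : q ≠ 0 := fun h => hp0 (by rw [hq, h, mul_zero])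
    have hdq : q.natDegree = n - 2 ∧ 2 ≤ n := by
      have h1 := natDegree_mul hs0 hq0
      rw [hsdeg, ← hq, hn] at h1; omega
    have hseval : ∀ t : ℝ, 0 < s.eval t := by
      intro t
      have h1 : s.eval t = (t - z.re) ^ 2 + z.im ^ 2 := by
        rw [hsdef, norm_sq_complex]
        simp only [eval_add, eval_sub, eval_mul, eval_pow, eval_X, eval_C]
        ring
      rw [h1]
      have h2 : 0 < z.im ^ 2 := by positivity
      positivity
    have hqpos : ∀ t ∈ Set.Icc a b, 0 ≤ q.eval t := by
      intro t ht
      have h2 : 0 ≤ s.eval t * q.eval t := by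
        have := hpos t ht; rw [hq] at this; simpa using this
      nlinarith [hseval t]
    obtain ⟨hE, hO⟩ := ih (n-2) (by omega) q (by omega) hqpos
    have hsER : ER a b 1 s := by
      refine ⟨(X - C z.re) ^ 2 + (C z.im) ^ 2, 0, ?_, SOSL.zero, ?_⟩
      · refine SOSL.add (SOSL.single ?_) (SOSL.single ?_)
        · rw [natDegree_X_sub_C]
        · simp
      · rw [hsdef, norm_sq_complex]
        simp only [C_add, C_mul, C_pow, map_ofNat]
        ring
    have hEp : ER a b ((n+1)/2) p := by
      rw [hq]
      exact (hsER.mul hE).mono (by omega)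
    refine ⟨hEp, (conv_EO hab hEp).mono ?_⟩
    obtain ⟨k, hk⟩ := heven
    omega

theorem list_sum_sq (L : List ℝ[X]) :
    (L.map (· ^ 2)).sum = ∑ i : Fin L.length, (L.get i) ^ 2 := by
  induction L with
  | nil => simp
  | cons x L ih => simp [Fin.sum_univ_succ, ih]

end Stmt18Aux

/-- Fekete / Markov–Lukács: a univariate polynomial of degree at most `2d` that is
nonnegative on `[a,b]` can be written as `σ₀ + σ₁ (t-a)(b-t)` with `σ₀` a sum of squares of
polynomials of degree at most `d` and `σ₁` a sum of squares of polynomials of degree at most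
`d-1`. -/
theorem stmt18 (d : ℕ) (p : Polynomial ℝ) (hdeg : p.natDegree ≤ 2 * d)
    (a b : ℝ) (hab : a < b) (hpos : ∀ t ∈ Set.Icc a b, 0 ≤ p.eval t) :
    ∃ (k₀ k₁ : ℕ) (q : Fin k₀ → Polynomial ℝ) (r : Fin k₁ → Polynomial ℝ),
      (∀ i, (q i).natDegree ≤ d) ∧ (∀ i, (r i).natDegree ≤ d - 1) ∧
      p = (∑ i, (q i) ^ 2)
          + (∑ i, (r i) ^ 2) * ((Polynomial.X - Polynomial.C a)
              * (Polynomial.C b - Polynomial.X)) := by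
  have h := (Stmt18Aux.main hab (2*d) p hdeg hpos).1
  have h' : Stmt18Aux.ER a b d p := h.mono (by omega)
  obtain ⟨σ0, σ1, ⟨L, hL, rfl⟩, ⟨M, hM, rfl⟩, hp⟩ := h'
  refine ⟨L.length, M.length, fun i => L.get i, fun i => M.get i, ?_, ?_, ?_⟩
  · intro i; exact hL (L.get i) (by exact List.get_mem L i)
  · intro i
    have h2 : (M.get i).natDegree + 1 ≤ d := hM (M.get i) (by exact List.get_mem M i)
    show (M.get i).natDegree ≤ d - 1
    omega
  · rw [hp, Stmt18Aux.list_sum_sq L, Stmt18Aux.list_sum_sq M]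
end
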